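/- (Kuijlaars–Serra Capizzano, single accumulation point) Let (a_k)_k and (b_k)_k be bounded real sequences with b_k > 0 for all k, and set a^k = (a_1,…,a_k), b^k = (b_1,…,b_k). Suppose there exist a ∈ ℝ and b > 0 such that for every ε > 0, #{j ≤ k : |a_j − a| ≥ ε} = o(k) and #{j ≤ k : |b_j − b| ≥ ε} = o(k) as k → ∞. Then for every continuous function φ on [a−2b, a+2b], lim_{k→∞} (1/k)·Trace[φ(J(a^k,b^k))] = (1/π) ∫_0^π φ(a + 2b·cos x) dx. -/

import Mathlib

open Filter MeasureTheory

noncomputable section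

/-- The `k × k` Jacobi (real symmetric tridiagonal) matrix with diagonal entries
`a 0, …, a (k-1)` and sub/super-diagonal entries `b 0, …, b (k-2)` (0-indexed). -/
def jacobiMatrix (k : ℕ) (a b : ℕ → ℝ) : Matrix (Fin k) (Fin k) ℝ :=
  Matrix.of fun i j =>
    if (i : ℕ) = (j : ℕ) then a i
    else if (i : ℕ) + 1 = (j : ℕ) then b i
    else if (j : ℕ) + 1 = (i : ℕ) then b j
    else 0

theorem jacobiMatrix_isHermitian (k : ℕ) (a b : ℕ → ℝ) :
    (jacobiMatrix k a b).IsHermitian := by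
  show _ = _
  ext i j
  simp only [Matrix.conjTranspose_apply, jacobiMatrix, Matrix.of_apply, star_trivial]
  by_cases h1 : (i : ℕ) = (j : ℕ)
  · have h : i = j := Fin.ext h1
    subst h
    rfl
  · have h1' : ¬ (j : ℕ) = (i : ℕ) := fun h => h1 h.symm
    by_cases h2 : (i : ℕ) + 1 = (j : ℕ)
    · have h3 : ¬ (j : ℕ) + 1 = (i : ℕ) := by omega
      simp [h1, h1', h2, h3]
    · by_cases h3 : (j : ℕ) + 1 = (i : ℕ) <;> simp [h1, h1', h2, h3]

/-- `Trace[φ(J(a,b))] = ∑ⱼ φ(λⱼ)`, the sum of `φ` over the eigenvalues of the Jacobi matrix. -/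
def jacobiTrace (k : ℕ) (a b : ℕ → ℝ) (φ : ℝ → ℝ) : ℝ :=
  ∑ i, φ ((jacobiMatrix_isHermitian k a b).eigenvalues i)

/-- The class `𝒮`: small deviations `∑ᵢ |a_{i+1}^k − a_i^k| = o(k)` and entries in `[0,1]`. -/
def MemS (a : ℕ → ℕ → ℝ) : Prop :=
  ((fun k : ℕ => ∑ i ∈ Finset.range (k - 1), |a k (i + 1) - a k i|)
      =o[Filter.atTop] fun k : ℕ => (k : ℝ)) ∧
  ∀ k : ℕ, ∀ i < k, a k i ∈ Set.Icc (0 : ℝ) 1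

/-- The class `𝒮′`: for every `δ ∈ (0,1)`, `∑ᵢ |a_{i+1}^k − a_i^k| = O(k^{1−δ})`, and
`maxᵢ |a_i^k| = O(log k)`. -/
def MemS' (a : ℕ → ℕ → ℝ) : Prop :=
  (∀ δ : ℝ, δ ∈ Set.Ioo (0 : ℝ) 1 →
    ((fun k : ℕ => ∑ i ∈ Finset.range (k - 1), |a k (i + 1) - a k i|)
        =O[Filter.atTop] fun k : ℕ => (k : ℝ) ^ (1 - δ))) ∧
  ∃ C : ℝ, ∀ᶠ k : ℕ in Filter.atTop, ∀ i < k, |a k i| ≤ C * Real.log k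

/-- `μ`-distributed on `I² = [0,1]²`. -/
def MuDistributedI (a b : ℕ → ℕ → ℝ) (μ : Measure (ℝ × ℝ)) : Prop :=
  ∀ ψ : ℝ × ℝ → ℝ, ContinuousOn ψ (Set.Icc (0 : ℝ) 1 ×ˢ Set.Icc (0 : ℝ) 1) →
    Filter.Tendsto (fun k : ℕ => (1 / (k : ℝ)) * ∑ j ∈ Finset.range k, ψ (a k j, b k j))
      Filter.atTop (nhds (∫ p, ψ p ∂μ))

/-- `μ`-distributed on `ℝ²` (test functions: bounded continuous). -/
def MuDistributedR (a b : ℕ → ℕ → ℝ) (μ : Measure (ℝ × ℝ)) : Prop :=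
  ∀ ψ : ℝ × ℝ → ℝ, Continuous ψ → (∃ C : ℝ, ∀ p, |ψ p| ≤ C) →
    Filter.Tendsto (fun k : ℕ => (1 / (k : ℝ)) * ∑ j ∈ Finset.range k, ψ (a k j, b k j))
      Filter.atTop (nhds (∫ p, ψ p ∂μ))

/-- Tightness via closed bounded rectangles. -/
def TightRect (μ : Measure (ℝ × ℝ)) : Prop :=
  ∀ ε : ℝ, 0 < ε → ∃ x₁ x₂ y₁ y₂ : ℝ,
    μ ((Set.Icc x₁ x₂ ×ˢ Set.Icc y₁ y₂)ᶜ) < ENNReal.ofReal ε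

/-- Almost everywhere increasing sequence of vectors. -/
def AEIncreasing (a : ℕ → ℕ → ℝ) : Prop :=
  Filter.Tendsto
    (fun k : ℕ => (((Finset.range (k - 1)).filter fun i => a k i ≤ a k (i + 1)).card : ℝ) / k)
    Filter.atTop (nhds 1)

/-- Almost everywhere decreasing sequence of vectors. -/
def AEDecreasing (a : ℕ → ℕ → ℝ) : Prop :=
  Filter.Tendsto
    (fun k : ℕ => (((Finset.range (k - 1)).filter fun i => a k (i + 1) ≤ a k i).card : ℝ) / k)
    Filter.atTop (nhds 1)

/-- Almost everywhere monotone sequence of vectors. -/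
def AEMonotone (a : ℕ → ℕ → ℝ) : Prop :=
  AEIncreasing a ∨ AEDecreasing a


/-! The moments `(1/k) tr J_kᵐ` are compared with those of the circulant matrix
`C_k = a + b (S + S⁻¹)`, `S` the cyclic shift of `Fin k`. The entries of `J_k - C_k` are small
except on a set of indices of density zero and at two corners, so its entrywise `ℓ¹` norm is
`o(k)`; since both matrices have uniformly bounded row sums, `tr J_kᵐ - tr C_kᵐ = o(k)`.
For `m < k`, `tr C_kᵐ` is `k` times the constant term of `(a + b z + b z⁻¹)ᵐ`, which equals
`(1/π) ∫₀^π (a + 2b cos x)ᵐ dx`. This proves the theorem for polynomial `φ`, and since all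
eigenvalues lie in a fixed compact interval, Weierstrass approximation extends it to
continuous `φ`. -/

open Matrix Polynomial Real Topology

/- Matrices carry the `ℓ∞`-operator norm: `‖A‖` is the largest absolute row sum of `A`. -/
attribute [local instance] Matrix.linftyOpNormedAddCommGroup Matrix.linftyOpNormedRing
  Matrix.linftyOpNormedAlgebra

theorem Int.modEq_iff_eq_of_abs_sub_lt {k x y : ℤ} (h : |x - y| < k) :
    x ≡ y [ZMOD k] ↔ x = y := by
  rw [Int.modEq_iff_dvd]
  refine ⟨fun hd => ?_, fun hxy => by simp [hxy]⟩
  have := Int.eq_zero_of_abs_lt_dvd hd (by rwa [abs_sub_comm])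
  linarith

theorem Fin.intCast_modEq_iff {k : ℕ} {i j : Fin k} : (i : ℤ) ≡ j [ZMOD k] ↔ i = j := by
  rw [Int.modEq_iff_eq_of_abs_sub_lt (by rw [abs_lt]; omega), Fin.ext_iff]
  exact_mod_cast Iff.rfl

theorem Fin.exists_intCast_modEq {k : ℕ} [NeZero k] (x : ℤ) : ∃ i : Fin k, x ≡ i [ZMOD k] := by
  have hk : (0 : ℤ) < k := by have := NeZero.ne k; omega
  have h0 := Int.emod_nonneg x hk.ne'
  have h1 := Int.emod_lt_of_pos x hk
  refine ⟨⟨(x % k).toNat, by omega⟩, ?_⟩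
  simp [Int.ModEq, Int.toNat_of_nonneg h0]

theorem Fintype.sum_ite_le_of_subsingleton {ι : Type*} [Fintype ι] {P : ι → Prop}
    [DecidablePred P] (hP : ∀ i j, P i → P j → i = j) {c : ℝ} (hc : 0 ≤ c) :
    ∑ i, (if P i then c else 0) ≤ c := by
  rw [Finset.sum_ite, Finset.sum_const_zero, add_zero, Finset.sum_const, nsmul_eq_mul]
  have : (Finset.univ.filter P).card ≤ 1 := Finset.card_le_one.mpr fun i hi j hj =>
    hP i j (Finset.mem_filter.mp hi).2 (Finset.mem_filter.mp hj).2
  exact mul_le_of_le_one_left hc (by exact_mod_cast this)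

def StatisticallyConvergesTo (f : ℕ → ℝ) (c : ℝ) : Prop :=
  ∀ ε : ℝ, 0 < ε → (fun k : ℕ => (((Finset.range k).filter fun j => ε ≤ |f j - c|).card : ℝ))
    =o[atTop] fun k : ℕ => (k : ℝ)

theorem StatisticallyConvergesTo.tendsto_sum_abs_sub_div {f : ℕ → ℝ} {c B : ℝ}
    (h : StatisticallyConvergesTo f c) (hB : ∀ j, |f j - c| ≤ B) :
    Tendsto (fun k : ℕ => (∑ j ∈ Finset.range k, |f j - c|) / k) atTop (𝓝 0) := by
  have hB0 : 0 ≤ B := (abs_nonneg _).trans (hB 0)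
  refine tendsto_order.2 ⟨fun r hr => Eventually.of_forall fun k =>
    hr.trans_le (div_nonneg (Finset.sum_nonneg fun j _ => abs_nonneg _) k.cast_nonneg),
    fun ε hε => ?_⟩
  have hbad := (h (ε / 2) (by positivity)).def (c := ε / (2 * (B + 1))) (by positivity)
  filter_upwards [hbad, eventually_gt_atTop 0] with k hk hk0
  set bad := (Finset.range k).filter fun j => ε / 2 ≤ |f j - c|
  rw [Real.norm_natCast, Real.norm_natCast] at hk
  have hsplit : ∑ j ∈ Finset.range k, |f j - c| ≤ bad.card * B + k * (ε / 2) := by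
    rw [← Finset.sum_filter_add_sum_filter_not _ (fun j => ε / 2 ≤ |f j - c|)]
    refine add_le_add ?_ ?_
    · simpa using Finset.sum_le_card_nsmul bad _ B fun j _ => hB j
    · refine (Finset.sum_le_card_nsmul _ _ (ε / 2) fun j hj =>
        (not_le.mp (Finset.mem_filter.mp hj).2).le).trans ?_
      rw [nsmul_eq_mul]
      gcongr
      simpa using Finset.card_filter_le (Finset.range k) _
  rw [div_lt_iff₀ (by exact_mod_cast hk0)]
  calc _ ≤ bad.card * B + k * (ε / 2) := hsplit
    _ ≤ ε / (2 * (B + 1)) * k * B + k * (ε / 2) := by gcongr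
    _ < ε * k := by
      have : ε / (2 * (B + 1)) * B < ε / 2 := by
        rw [div_mul_eq_mul_div, div_lt_div_iff₀ (by positivity) two_pos]; nlinarith
      have : (0 : ℝ) < k := by exact_mod_cast hk0
      nlinarith

namespace Matrix

section EntrywiseL1

variable {m n : Type*} [Fintype m] [Fintype n]

theorem sum_abs_le_linfty_opNorm (A : Matrix m n ℝ) (i : m) : ∑ j, |A i j| ≤ ‖A‖ := by
  rw [linfty_opNorm_def]
  have := Finset.le_sup (f := fun i : m => ∑ j : n, ‖A i j‖₊) (Finset.mem_univ i)
  simpa [← NNReal.coe_le_coe, Real.norm_eq_abs] using this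

theorem linfty_opNorm_le_of_forall_sum_abs_le {A : Matrix m n ℝ} {β : ℝ} (hβ : 0 ≤ β)
    (h : ∀ i, ∑ j, |A i j| ≤ β) : ‖A‖ ≤ β := by
  rw [linfty_opNorm_def]
  lift β to NNReal using hβ
  norm_cast
  exact Finset.sup_le fun i _ => by simpa [← NNReal.coe_le_coe, Real.norm_eq_abs] using h i

def entrywiseL1 (A : Matrix m n ℝ) : ℝ := ∑ i, ∑ j, |A i j|

theorem entrywiseL1_nonneg (A : Matrix m n ℝ) : 0 ≤ entrywiseL1 A := by
  unfold entrywiseL1; positivity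

theorem entrywiseL1_add_le (A B : Matrix m n ℝ) :
    entrywiseL1 (A + B) ≤ entrywiseL1 A + entrywiseL1 B := by
  simp only [entrywiseL1, ← Finset.sum_add_distrib]
  gcongr with i _ j _
  exact abs_add_le _ _

theorem entrywiseL1_transpose (A : Matrix m n ℝ) : entrywiseL1 Aᵀ = entrywiseL1 A := by
  simp only [entrywiseL1, transpose_apply]
  exact Finset.sum_comm

theorem abs_trace_le_entrywiseL1 (A : Matrix n n ℝ) : |A.trace| ≤ entrywiseL1 A :=
  (Finset.abs_sum_le_sum_abs _ _).trans <| Finset.sum_le_sum fun i _ =>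
    Finset.single_le_sum (f := fun j => |A i j|) (fun _ _ => abs_nonneg _) (Finset.mem_univ i)

theorem entrywiseL1_mul_le (A : Matrix m n ℝ) (B : Matrix n n ℝ) :
    entrywiseL1 (A * B) ≤ entrywiseL1 A * ‖B‖ := by
  calc entrywiseL1 (A * B) ≤ ∑ i, ∑ j, ∑ l, |A i l| * |B l j| := by
        unfold entrywiseL1
        gcongr with i _ j _
        simpa only [mul_apply, abs_mul] using
          Finset.abs_sum_le_sum_abs (fun l => A i l * B l j) Finset.univ
    _ = ∑ i, ∑ l, |A i l| * ∑ j, |B l j| := by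
        simp only [Finset.mul_sum]
        exact Finset.sum_congr rfl fun i _ => Finset.sum_comm
    _ ≤ ∑ i, ∑ l, |A i l| * ‖B‖ :=
        Finset.sum_le_sum fun i _ => Finset.sum_le_sum fun l _ =>
          mul_le_mul_of_nonneg_left (sum_abs_le_linfty_opNorm B l) (abs_nonneg _)
    _ = entrywiseL1 A * ‖B‖ := by simp [entrywiseL1, Finset.sum_mul]

theorem entrywiseL1_mul_le' (A : Matrix m m ℝ) (B : Matrix m n ℝ) :
    entrywiseL1 (A * B) ≤ ‖Aᵀ‖ * entrywiseL1 B := by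
  rw [← entrywiseL1_transpose, transpose_mul, mul_comm, ← entrywiseL1_transpose B]
  exact entrywiseL1_mul_le _ _

variable [DecidableEq n]

theorem entrywiseL1_pow_sub_pow_le [Nonempty n] {X Y : Matrix n n ℝ} {β : ℝ}
    (hX : ‖Xᵀ‖ ≤ β) (hY : ‖Y‖ ≤ β) (k : ℕ) :
    entrywiseL1 (X ^ k - Y ^ k) ≤ k * β ^ (k - 1) * entrywiseL1 (X - Y) := by
  have hβ : 0 ≤ β := (norm_nonneg _).trans hY
  induction k with
  | zero => simp [entrywiseL1]
  | succ k ih =>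
    have hsplit : X ^ (k + 1) - Y ^ (k + 1) = X ^ k * (X - Y) + (X ^ k - Y ^ k) * Y := by
      noncomm_ring
    have hXk : ‖(X ^ k)ᵀ‖ ≤ β ^ k :=
      (transpose_pow X k ▸ norm_pow_le _ k).trans (pow_le_pow_left₀ (norm_nonneg _) hX k)
    have hk : (k : ℝ) * β ^ (k - 1) * β = k * β ^ k := by
      cases k with
      | zero => simp
      | succ k => rw [Nat.add_sub_cancel, pow_succ]; ring
    rw [hsplit]
    calc entrywiseL1 (X ^ k * (X - Y) + (X ^ k - Y ^ k) * Y)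
        ≤ β ^ k * entrywiseL1 (X - Y) + k * β ^ (k - 1) * entrywiseL1 (X - Y) * β := by
          refine (entrywiseL1_add_le _ _).trans (add_le_add ?_ ?_)
          · exact (entrywiseL1_mul_le' _ _).trans
              (mul_le_mul_of_nonneg_right hXk (entrywiseL1_nonneg _))
          · exact (entrywiseL1_mul_le _ _).trans (mul_le_mul ih hY (norm_nonneg _)
              (by have := entrywiseL1_nonneg (X - Y); positivity))
      _ = (k + 1 : ℕ) * β ^ (k + 1 - 1) * entrywiseL1 (X - Y) := by
          rw [mul_right_comm _ (entrywiseL1 _), hk, Nat.add_sub_cancel]; push_cast; ring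

theorem abs_trace_aeval_sub_le [Nonempty n] {X Y : Matrix n n ℝ} {β : ℝ}
    (hX : ‖Xᵀ‖ ≤ β) (hY : ‖Y‖ ≤ β) (p : ℝ[X]) :
    |(aeval X p).trace - (aeval Y p).trace|
      ≤ (∑ i ∈ Finset.range (p.natDegree + 1), |p.coeff i| * (i * β ^ (i - 1)))
        * entrywiseL1 (X - Y) := by
  simp only [aeval_eq_sum_range, trace_sum, trace_smul, smul_eq_mul, ← Finset.sum_sub_distrib,
    ← mul_sub, ← trace_sub, Finset.sum_mul]
  refine (Finset.abs_sum_le_sum_abs _ _).trans (Finset.sum_le_sum fun i _ => ?_)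
  rw [abs_mul, mul_assoc]
  exact mul_le_mul_of_nonneg_left ((abs_trace_le_entrywiseL1 _).trans
    (entrywiseL1_pow_sub_pow_le hX hY i)) (abs_nonneg _)

end EntrywiseL1

section Hermitian

variable {n : Type*} [Fintype n] [DecidableEq n] {A : Matrix n n ℝ}

theorem IsHermitian.trace_cfc (hA : A.IsHermitian) (f : ℝ → ℝ) :
    (cfc f A).trace = ∑ i, f (hA.eigenvalues i) := by
  rw [hA.cfc_eq, IsHermitian.cfc, Unitary.conjStarAlgAut_apply, trace_mul_cycle,
    Unitary.coe_star_mul_self, one_mul, trace_diagonal]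
  simp

theorem IsHermitian.trace_aeval (hA : A.IsHermitian) (p : ℝ[X]) :
    (aeval A p).trace = ∑ i, p.eval (hA.eigenvalues i) := by
  rw [← cfc_polynomial p A hA.isSelfAdjoint, hA.trace_cfc]

theorem IsHermitian.abs_eigenvalues_le (hA : A.IsHermitian) (i : n) :
    |hA.eigenvalues i| ≤ ‖A‖ := by
  have : Nonempty n := ⟨i⟩
  exact spectrum.norm_le_norm_of_mem (hA.eigenvalues_mem_spectrum_real i)

end Hermitian

end Matrix

def cyclicShift (k : ℕ) (t : ℤ) : Matrix (Fin k) (Fin k) ℝ :=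
  of fun i j => if (i : ℤ) + t ≡ j [ZMOD k] then 1 else 0

section CyclicShift

variable {k : ℕ}

theorem sum_cyclicShift_mul (t : ℤ) (i : Fin k) (f : Fin k → ℝ) {l : Fin k}
    (hl : (i : ℤ) + t ≡ l [ZMOD k]) : ∑ j, cyclicShift k t i j * f j = f l := by
  rw [Finset.sum_eq_single l (fun j _ hj => ?_) (by simp)]
  · simp [cyclicShift, hl]
  · have : ¬ (i : ℤ) + t ≡ j [ZMOD k] := fun h => hj (Fin.intCast_modEq_iff.mp (h.symm.trans hl))
    simp [cyclicShift, this]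

theorem cyclicShift_zero : cyclicShift k 0 = 1 := by
  ext i j
  simp only [cyclicShift, add_zero, Fin.intCast_modEq_iff, of_apply, one_apply]

theorem cyclicShift_mul (s t : ℤ) : cyclicShift k s * cyclicShift k t = cyclicShift k (s + t) := by
  ext i j
  have : NeZero k := ⟨by have := i.pos; omega⟩
  obtain ⟨l, hl⟩ := Fin.exists_intCast_modEq (k := k) (i + s)
  rw [mul_apply, sum_cyclicShift_mul s i _ hl]
  have : (l : ℤ) + t ≡ i + (s + t) [ZMOD k] := by rw [← add_assoc]; exact (hl.add_right t).symm
  exact if_congr ⟨this.symm.trans, this.trans⟩ rfl rfl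

theorem cyclicShift_pow (t : ℤ) (m : ℕ) : cyclicShift k t ^ m = cyclicShift k (m * t) := by
  induction m with
  | zero => simp [cyclicShift_zero]
  | succ m ih => rw [pow_succ, ih, cyclicShift_mul]; push_cast; ring_nf

theorem transpose_cyclicShift (t : ℤ) : (cyclicShift k t)ᵀ = cyclicShift k (-t) := by
  ext i j
  simp only [cyclicShift, transpose_apply, of_apply, Int.modEq_iff_dvd]
  exact if_congr (by rw [← dvd_neg]; ring_nf) rfl rfl

theorem trace_cyclicShift (t : ℤ) :
    (cyclicShift k t).trace = if (k : ℤ) ∣ t then (k : ℝ) else 0 := by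
  have (i : Fin k) : (i : ℤ) + t ≡ i [ZMOD k] ↔ (k : ℤ) ∣ t := by
    rw [Int.modEq_iff_dvd, sub_add_cancel_left, dvd_neg]
  simp [Matrix.trace, cyclicShift, this]

theorem linfty_opNorm_cyclicShift_le (t : ℤ) : ‖cyclicShift k t‖ ≤ 1 := by
  refine linfty_opNorm_le_of_forall_sum_abs_le zero_le_one fun i => ?_
  have : NeZero k := ⟨by have := i.pos; omega⟩
  obtain ⟨l, hl⟩ := Fin.exists_intCast_modEq (k := k) (i + t)
  have habs (j : Fin k) : |cyclicShift k t i j| = cyclicShift k t i j * 1 := by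
    simp only [cyclicShift, of_apply]; split_ifs <;> simp
  simp only [habs, sum_cyclicShift_mul t i _ hl, le_refl]

theorem cyclicShift_one_apply (i j : Fin k) : cyclicShift k 1 i j =
    if (i : ℕ) + 1 = j ∨ ((i : ℕ) + 1 = k ∧ (j : ℕ) = 0) then 1 else 0 := by
  refine if_congr ?_ rfl rfl
  rcases (Nat.succ_le_of_lt i.isLt).eq_or_lt with h | h
  · have hk : (i : ℤ) + 1 ≡ 0 [ZMOD k] := by
      rw [Int.modEq_zero_iff_dvd]; exact ⟨1, by omega⟩
    rw [show (i : ℤ) + 1 ≡ j [ZMOD k] ↔ 0 ≡ j [ZMOD k] from ⟨hk.symm.trans, hk.trans⟩,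
      Int.modEq_iff_eq_of_abs_sub_lt (by rw [abs_lt]; omega)]
    omega
  · rw [Int.modEq_iff_eq_of_abs_sub_lt (by rw [abs_lt]; omega)]
    omega

end CyclicShift

/-- The `j`-th moment of the arcsine law on `[-2, 2]`, i.e. of `2 cos U` with `U` uniform on
`[0, π]`; it counts the closed walks of length `j` on `ℤ`. -/
def arcsineMoment (j : ℕ) : ℝ := if Even j then ((j / 2).centralBinom : ℝ) else 0

theorem arcsineMoment_add_two (j : ℕ) :
    arcsineMoment (j + 2) = 4 * (j + 1) / (j + 2) * arcsineMoment j := by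
  rcases Nat.even_or_odd j with ⟨q, rfl⟩ | hodd
  · have hrec : ((q + 1 : ℕ) : ℝ) * (q + 1).centralBinom = 2 * (2 * q + 1) * q.centralBinom := by
      exact_mod_cast Nat.succ_mul_centralBinom_succ q
    simp only [arcsineMoment, Nat.even_add, even_two, show Even (q + q) from ⟨q, rfl⟩, if_true,
      show (q + q + 2) / 2 = q + 1 by omega, show (q + q) / 2 = q by omega]
    push_cast at hrec ⊢
    field_simp
    linear_combination 2 * hrec
  · have : ¬ Even j := Nat.not_even_iff_odd.mpr hodd
    simp [arcsineMoment, Nat.even_add, this]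

theorem integral_two_mul_cos_pow (j : ℕ) :
    ∫ x in (0 : ℝ)..π, (2 * cos x) ^ j = π * arcsineMoment j := by
  induction j using Nat.twoStepInduction with
  | zero => simp [arcsineMoment]
  | one => simp [arcsineMoment]
  | more j ih _ =>
    simp only [mul_pow, intervalIntegral.integral_const_mul] at ih ⊢
    rw [integral_cos_pow, sin_pi, sin_zero, arcsineMoment_add_two, pow_add, mul_left_comm, ← ih]
    simp only [mul_zero, sub_self, zero_div, zero_add]
    ring

theorem integral_eval_two_mul_cos (q : ℝ[X]) :
    ∫ x in (0 : ℝ)..π, q.eval (2 * cos x)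
      = π * ∑ n ∈ Finset.range (q.natDegree + 1), q.coeff n * arcsineMoment n := by
  simp_rw [eval_eq_sum_range]
  rw [intervalIntegral.integral_finsetSum fun n _ => by
    apply Continuous.intervalIntegrable; fun_prop]
  simp_rw [intervalIntegral.integral_const_mul, integral_two_mul_cos_pow, Finset.mul_sum]
  exact Finset.sum_congr rfl fun n _ => by ring

theorem trace_cyclicShift_add_pow {k j : ℕ} (hj : j < k) :
    ((cyclicShift k 1 + cyclicShift k (-1)) ^ j).trace = k * arcsineMoment j := by
  have hc : Commute (cyclicShift k 1) (cyclicShift k (-1)) := by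
    rw [Commute, SemiconjBy, cyclicShift_mul, cyclicShift_mul, add_comm]
  have hdvd (i : ℕ) (hi : i ≤ j) : (k : ℤ) ∣ i * 1 + ((j - i : ℕ) : ℤ) * -1 ↔ 2 * i = j := by
    rw [← Int.modEq_zero_iff_dvd, Int.modEq_iff_eq_of_abs_sub_lt (by rw [abs_lt]; omega)]
    omega
  have hterm (i : ℕ) (hi : i ∈ Finset.range (j + 1)) :
      (cyclicShift k 1 ^ i * cyclicShift k (-1) ^ (j - i)
        * (j.choose i : Matrix (Fin k) (Fin k) ℝ)).trace
        = if 2 * i = j then k * (j.choose i : ℝ) else 0 := by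
    rw [← nsmul_eq_mul', trace_smul, cyclicShift_pow, cyclicShift_pow, cyclicShift_mul,
      trace_cyclicShift, if_congr (hdvd i (by simp at hi; omega)) rfl rfl]
    split_ifs <;> simp [mul_comm]
  rw [hc.add_pow, trace_sum, Finset.sum_congr rfl hterm, arcsineMoment]
  split_ifs with hev
  · obtain ⟨q, rfl⟩ := hev
    rw [Finset.sum_eq_single q (fun i _ hi => if_neg (by omega)) (by simp), if_pos (by omega),
      show (q + q) / 2 = q by omega, Nat.centralBinom_eq_two_mul_choose, two_mul]
  · rw [mul_zero]
    exact Finset.sum_eq_zero fun i _ => if_neg fun h => hev ⟨i, by omega⟩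

theorem trace_aeval_cyclicShift_add {k : ℕ} (q : ℝ[X]) (hq : q.natDegree < k) :
    (aeval (cyclicShift k 1 + cyclicShift k (-1)) q).trace
      = k * ∑ n ∈ Finset.range (q.natDegree + 1), q.coeff n * arcsineMoment n := by
  rw [aeval_eq_sum_range, trace_sum, Finset.mul_sum]
  refine Finset.sum_congr rfl fun n hn => ?_
  rw [trace_smul, trace_cyclicShift_add_pow (by simp at hn; omega), smul_eq_mul]
  ring

section Jacobi

variable {k : ℕ}

theorem jacobiMatrix_sub (a b a' b' : ℕ → ℝ) :
    jacobiMatrix k a b - jacobiMatrix k a' b' = jacobiMatrix k (a - a') (b - b') := by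
  ext i j
  simp only [jacobiMatrix, Matrix.sub_apply, of_apply, Pi.sub_apply]
  split_ifs <;> ring

theorem abs_jacobiMatrix_apply (a b : ℕ → ℝ) (i j : Fin k) :
    |jacobiMatrix k a b i j| = (if (i : ℕ) = j then |a i| else 0)
      + (if (i : ℕ) + 1 = j then |b i| else 0) + (if (j : ℕ) + 1 = i then |b j| else 0) := by
  simp only [jacobiMatrix, of_apply]
  split_ifs <;> first | omega | simp

theorem linfty_opNorm_jacobiMatrix_le {a b : ℕ → ℝ} {M : ℝ} (ha : ∀ j, |a j| ≤ M)
    (hb : ∀ j, |b j| ≤ M) : ‖jacobiMatrix k a b‖ ≤ 3 * M := by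
  have hM : 0 ≤ M := (abs_nonneg _).trans (ha 0)
  refine linfty_opNorm_le_of_forall_sum_abs_le (by positivity) fun i => ?_
  have hentry (j : Fin k) : |jacobiMatrix k a b i j| ≤ (if (i : ℕ) = j then M else 0)
      + (if (i : ℕ) + 1 = j then M else 0) + (if (j : ℕ) + 1 = i then M else 0) := by
    rw [abs_jacobiMatrix_apply]
    gcongr <;> split_ifs <;> simp [ha, hb]
  refine (Finset.sum_le_sum fun j _ => hentry j).trans ?_
  simp only [Finset.sum_add_distrib]
  have h1 := Fintype.sum_ite_le_of_subsingleton (P := fun j : Fin k => (i : ℕ) = j)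
    (fun _ _ h h' => Fin.ext (by omega)) hM
  have h2 := Fintype.sum_ite_le_of_subsingleton (P := fun j : Fin k => (i : ℕ) + 1 = j)
    (fun _ _ h h' => Fin.ext (by omega)) hM
  have h3 := Fintype.sum_ite_le_of_subsingleton (P := fun j : Fin k => (j : ℕ) + 1 = i)
    (fun _ _ h h' => Fin.ext (by omega)) hM
  linarith

theorem entrywiseL1_jacobiMatrix_le (a b : ℕ → ℝ) :
    entrywiseL1 (jacobiMatrix k a b)
      ≤ ∑ i ∈ Finset.range k, |a i| + 2 * ∑ i ∈ Finset.range k, |b i| := by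
  simp only [entrywiseL1, abs_jacobiMatrix_apply, Finset.sum_add_distrib]
  have h1 : ∑ i : Fin k, ∑ j : Fin k, (if (i : ℕ) = j then |a i| else 0) ≤ ∑ i : Fin k, |a i| :=
    Finset.sum_le_sum fun i _ => Fintype.sum_ite_le_of_subsingleton
      (fun _ _ h h' => Fin.ext (by omega)) (abs_nonneg _)
  have h2 : ∑ i : Fin k, ∑ j : Fin k, (if (i : ℕ) + 1 = j then |b i| else 0)
      ≤ ∑ i : Fin k, |b i| :=
    Finset.sum_le_sum fun i _ => Fintype.sum_ite_le_of_subsingleton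
      (fun _ _ h h' => Fin.ext (by omega)) (abs_nonneg _)
  have h3 : ∑ i : Fin k, ∑ j : Fin k, (if (j : ℕ) + 1 = i then |b j| else 0)
      ≤ ∑ j : Fin k, |b j| := by
    rw [Finset.sum_comm]
    exact Finset.sum_le_sum fun j _ => Fintype.sum_ite_le_of_subsingleton
      (fun _ _ h h' => Fin.ext (by omega)) (abs_nonneg _)
  rw [← Fin.sum_univ_eq_sum_range (fun i => |a i|), ← Fin.sum_univ_eq_sum_range (fun i => |b i|)]
  linarith

/-- The Jacobi matrix with constant entries `a`, `b`, closed up into a cycle by two corner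
entries `b`; unlike the Jacobi matrix itself, the traces of its powers are exactly computable. -/
def circulantJacobiMatrix (k : ℕ) (a b : ℝ) : Matrix (Fin k) (Fin k) ℝ :=
  a • 1 + b • (cyclicShift k 1 + cyclicShift k (-1))

theorem linfty_opNorm_circulantJacobiMatrix_le (a b : ℝ) :
    ‖circulantJacobiMatrix k a b‖ ≤ |a| + 2 * |b| := by
  rw [circulantJacobiMatrix, ← cyclicShift_zero]
  calc _ ≤ ‖a • cyclicShift k 0‖ + ‖b • (cyclicShift k 1 + cyclicShift k (-1))‖ :=
        norm_add_le _ _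
    _ ≤ |a| * 1 + |b| * (1 + 1) := by
      rw [norm_smul, norm_smul, Real.norm_eq_abs, Real.norm_eq_abs]
      gcongr
      · exact linfty_opNorm_cyclicShift_le 0
      · exact (norm_add_le _ _).trans (add_le_add (linfty_opNorm_cyclicShift_le 1)
          (linfty_opNorm_cyclicShift_le (-1)))
    _ = |a| + 2 * |b| := by ring

theorem trace_aeval_circulantJacobiMatrix (a b : ℝ) (p : ℝ[X]) (hp : p.natDegree < k) :
    (aeval (circulantJacobiMatrix k a b) p).trace
      = k * ((1 / π) * ∫ x in (0 : ℝ)..π, p.eval (a + 2 * b * cos x)) := by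
  have hC : circulantJacobiMatrix k a b
      = aeval (cyclicShift k 1 + cyclicShift k (-1)) (C b * X + C a) := by
    simp [circulantJacobiMatrix, Algebra.algebraMap_eq_smul_one, add_comm]
  have hq : (p.comp (C b * X + C a)).natDegree < k :=
    natDegree_comp_le.trans_lt (by nlinarith [natDegree_linear_le (a := b) (b := a)])
  have heval (x : ℝ) :
      p.eval (a + 2 * b * cos x) = (p.comp (C b * X + C a)).eval (2 * cos x) := by
    rw [eval_comp]; congr 1; simp; ring
  rw [hC, ← aeval_comp, trace_aeval_cyclicShift_add _ hq]
  simp_rw [heval]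
  rw [integral_eval_two_mul_cos]
  field_simp

theorem entrywiseL1_jacobiMatrix_const_sub_circulantJacobiMatrix_le (a b : ℝ) :
    entrywiseL1 (jacobiMatrix k (fun _ => a) (fun _ => b) - circulantJacobiMatrix k a b)
      ≤ 2 * |b| := by
  have hentry (i j : Fin k) :
      |(jacobiMatrix k (fun _ => a) (fun _ => b) - circulantJacobiMatrix k a b) i j|
        = (if (i : ℕ) + 1 = k ∧ (j : ℕ) = 0 then |b| else 0)
          + (if (j : ℕ) + 1 = k ∧ (i : ℕ) = 0 then |b| else 0) := by
    rw [circulantJacobiMatrix, ← transpose_cyclicShift]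
    simp only [jacobiMatrix, Matrix.sub_apply, Matrix.add_apply, Matrix.smul_apply, one_apply,
      transpose_apply, cyclicShift_one_apply, of_apply, Fin.ext_iff, smul_eq_mul]
    split_ifs <;> first | omega | (ring_nf; simp [abs_mul])
  have hcorner (P : Fin k → Fin k → Prop) [∀ i j, Decidable (P i j)]
      (hP : ∀ i j i' j', P i j → P i' j' → i = i' ∧ j = j') :
      ∑ i, ∑ j, (if P i j then |b| else 0) ≤ |b| := by
    rw [← Fintype.sum_prod_type']
    exact Fintype.sum_ite_le_of_subsingleton
      (fun p q hp hq => Prod.ext_iff.mpr (hP _ _ _ _ hp hq)) (abs_nonneg b)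
  simp only [entrywiseL1, hentry, Finset.sum_add_distrib]
  have h1 := hcorner (fun i j => (i : ℕ) + 1 = k ∧ (j : ℕ) = 0)
    fun _ _ _ _ h h' => ⟨Fin.ext (by omega), Fin.ext (by omega)⟩
  have h2 := hcorner (fun i j => (j : ℕ) + 1 = k ∧ (i : ℕ) = 0)
    fun _ _ _ _ h h' => ⟨Fin.ext (by omega), Fin.ext (by omega)⟩
  linarith

theorem entrywiseL1_jacobiMatrix_sub_circulantJacobiMatrix_le (aseq bseq : ℕ → ℝ) (a b : ℝ) :
    entrywiseL1 (jacobiMatrix k aseq bseq - circulantJacobiMatrix k a b)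
      ≤ ∑ j ∈ Finset.range k, |aseq j - a| + 2 * ∑ j ∈ Finset.range k, |bseq j - b| + 2 * |b| := by
  rw [← sub_add_sub_cancel _ (jacobiMatrix k (fun _ => a) (fun _ => b)), jacobiMatrix_sub]
  exact (entrywiseL1_add_le _ _).trans (add_le_add (entrywiseL1_jacobiMatrix_le _ _)
    (entrywiseL1_jacobiMatrix_const_sub_circulantJacobiMatrix_le a b))

end Jacobi

theorem tendsto_trace_aeval_sub_div {X Y : (k : ℕ) → Matrix (Fin k) (Fin k) ℝ} {β : ℝ}
    (hX : ∀ k, ‖(X k)ᵀ‖ ≤ β) (hY : ∀ k, ‖Y k‖ ≤ β)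
    (hXY : Tendsto (fun k => entrywiseL1 (X k - Y k) / k) atTop (𝓝 0)) (p : ℝ[X]) :
    Tendsto (fun k => ((aeval (X k) p).trace - (aeval (Y k) p).trace) / k) atTop (𝓝 0) := by
  have hlim := hXY.const_mul
    (∑ i ∈ Finset.range (p.natDegree + 1), |p.coeff i| * (i * β ^ (i - 1)))
  rw [mul_zero] at hlim
  refine squeeze_zero_norm' ?_ hlim
  filter_upwards [eventually_gt_atTop 0] with k hk
  have : Nonempty (Fin k) := Fin.pos_iff_nonempty.mp hk
  rw [Real.norm_eq_abs, abs_div, Nat.abs_cast, mul_div_assoc']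
  gcongr
  exact abs_trace_aeval_sub_le (hX k) (hY k) p

section JacobiLimit

variable {aseq bseq : ℕ → ℝ} {a b M : ℝ}

theorem tendsto_entrywiseL1_jacobiMatrix_sub_circulantJacobiMatrix_div
    (ha : ∀ j, |aseq j| ≤ M) (hb : ∀ j, |bseq j| ≤ M)
    (hacca : StatisticallyConvergesTo aseq a) (haccb : StatisticallyConvergesTo bseq b) :
    Tendsto (fun k => entrywiseL1 (jacobiMatrix k aseq bseq - circulantJacobiMatrix k a b) / k)
      atTop (𝓝 0) := by
  have hdev {f : ℕ → ℝ} {c : ℝ} (hf : ∀ j, |f j| ≤ M) (hacc : StatisticallyConvergesTo f c) :=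
    hacc.tendsto_sum_abs_sub_div (B := M + |c|) fun j => by linarith [abs_sub (f j) c, hf j]
  have hbound := ((hdev ha hacca).add ((hdev hb haccb).const_mul 2)).add
    (tendsto_const_div_atTop_nhds_zero_nat (2 * |b|))
  simp only [mul_zero, add_zero] at hbound
  refine squeeze_zero (fun k => div_nonneg (entrywiseL1_nonneg _) k.cast_nonneg)
    (fun k => ?_) hbound
  rw [mul_div_assoc', ← add_div, ← add_div]
  gcongr
  exact entrywiseL1_jacobiMatrix_sub_circulantJacobiMatrix_le aseq bseq a b

theorem tendsto_jacobiTrace_eval (ha : ∀ j, |aseq j| ≤ M) (hb : ∀ j, |bseq j| ≤ M)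
    (hacca : StatisticallyConvergesTo aseq a) (haccb : StatisticallyConvergesTo bseq b)
    (p : ℝ[X]) :
    Tendsto (fun k : ℕ => (1 / (k : ℝ)) * jacobiTrace k aseq bseq (fun x => p.eval x)) atTop
      (𝓝 ((1 / π) * ∫ x in (0 : ℝ)..π, p.eval (a + 2 * b * cos x))) := by
  have hsymm (k : ℕ) : (jacobiMatrix k aseq bseq)ᵀ = jacobiMatrix k aseq bseq := by
    rw [← conjTranspose_eq_transpose_of_trivial]; exact jacobiMatrix_isHermitian k aseq bseq
  have hdiff := tendsto_trace_aeval_sub_div (β := 3 * M + (|a| + 2 * |b|))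
    (fun k => by
      rw [hsymm]
      linarith [linfty_opNorm_jacobiMatrix_le (k := k) ha hb, abs_nonneg a, abs_nonneg b])
    (fun k => by
      linarith [linfty_opNorm_circulantJacobiMatrix_le (k := k) a b, (abs_nonneg _).trans (ha 0)])
    (tendsto_entrywiseL1_jacobiMatrix_sub_circulantJacobiMatrix_div ha hb hacca haccb) p
  have hsplit : ∀ᶠ k : ℕ in atTop,
      ((aeval (jacobiMatrix k aseq bseq) p).trace
          - (aeval (circulantJacobiMatrix k a b) p).trace) / k
        + (1 / π) * ∫ x in (0 : ℝ)..π, p.eval (a + 2 * b * cos x)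
        = (1 / (k : ℝ)) * jacobiTrace k aseq bseq (fun x => p.eval x) := by
    filter_upwards [eventually_gt_atTop p.natDegree] with k hk
    rw [jacobiTrace, ← (jacobiMatrix_isHermitian k aseq bseq).trace_aeval,
      trace_aeval_circulantJacobiMatrix a b p hk]
    have : (k : ℝ) ≠ 0 := by exact_mod_cast (Nat.zero_lt_of_lt hk).ne'
    field_simp
    ring
  simpa using (hdiff.add_const _).congr' hsplit

end JacobiLimit

theorem tendsto_mean_of_forall_polynomial {x : (k : ℕ) → Fin k → ℝ} {g : ℝ → ℝ} {R : ℝ}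
    (hx : ∀ k i, x k i ∈ Set.Icc (-R) R) (hg : Continuous g) (hgR : ∀ t, g t ∈ Set.Icc (-R) R)
    (hpoly : ∀ p : ℝ[X], Tendsto (fun k : ℕ => (1 / (k : ℝ)) * ∑ i, p.eval (x k i)) atTop
      (𝓝 ((1 / π) * ∫ t in (0 : ℝ)..π, p.eval (g t))))
    {φ : ℝ → ℝ} (hφ : Continuous φ) :
    Tendsto (fun k : ℕ => (1 / (k : ℝ)) * ∑ i, φ (x k i)) atTop
      (𝓝 ((1 / π) * ∫ t in (0 : ℝ)..π, φ (g t))) := by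
  rw [Metric.tendsto_atTop]
  intro ε hε
  obtain ⟨p, hp⟩ := exists_polynomial_near_of_continuousOn (-R) R φ hφ.continuousOn (ε / 4)
    (by positivity)
  obtain ⟨N, hN⟩ := Metric.tendsto_atTop.mp (hpoly p) (ε / 4) (by positivity)
  refine ⟨N, fun k hk => ?_⟩
  have hmean :
      |(1 / (k : ℝ)) * ∑ i, φ (x k i) - (1 / (k : ℝ)) * ∑ i, p.eval (x k i)| ≤ ε / 4 := by
    rw [← mul_sub, ← Finset.sum_sub_distrib, abs_mul, abs_of_nonneg (by positivity)]
    calc _ ≤ 1 / (k : ℝ) * ∑ _i : Fin k, ε / 4 := by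
          gcongr
          refine (Finset.abs_sum_le_sum_abs _ _).trans (Finset.sum_le_sum fun i _ => ?_)
          rw [abs_sub_comm]; exact (hp _ (hx k i)).le
      _ ≤ ε / 4 := by
          rcases k.eq_zero_or_pos with rfl | hk0
          · simp; positivity
          · simp [field]
  have hint : |(1 / π) * (∫ t in (0 : ℝ)..π, p.eval (g t)) - (1 / π) * ∫ t in (0 : ℝ)..π, φ (g t)|
      ≤ ε / 4 := by
    rw [← mul_sub, ← intervalIntegral.integral_sub
      (by apply Continuous.intervalIntegrable; fun_prop)
      (by apply Continuous.intervalIntegrable; fun_prop), abs_mul, abs_of_pos (by positivity)]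
    calc _ ≤ 1 / π * (ε / 4 * |π - 0|) := by
          gcongr
          exact intervalIntegral.norm_integral_le_of_norm_le_const
            (f := fun t => p.eval (g t) - φ (g t)) fun t _ => (hp _ (hgR t)).le
      _ = ε / 4 := by rw [sub_zero, abs_of_pos pi_pos]; field_simp
  have hpk := hN k hk
  rw [Real.dist_eq] at hpk ⊢
  have h1 := abs_sub_le ((1 / (k : ℝ)) * ∑ i, φ (x k i)) ((1 / (k : ℝ)) * ∑ i, p.eval (x k i))
    ((1 / π) * ∫ t in (0 : ℝ)..π, p.eval (g t))
  have h2 := abs_sub_le ((1 / (k : ℝ)) * ∑ i, φ (x k i))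
    ((1 / π) * ∫ t in (0 : ℝ)..π, p.eval (g t)) ((1 / π) * ∫ t in (0 : ℝ)..π, φ (g t))
  linarith

theorem trace_formula_single_point_general (aseq bseq : ℕ → ℝ)
    (hbdd : ∃ M : ℝ, ∀ j, |aseq j| ≤ M ∧ |bseq j| ≤ M)
    (a b : ℝ)
    (hacca : ∀ ε : ℝ, 0 < ε →
      ((fun k : ℕ => (((Finset.range k).filter fun j => ε ≤ |aseq j - a|).card : ℝ))
        =o[Filter.atTop] fun k : ℕ => (k : ℝ)))
    (haccb : ∀ ε : ℝ, 0 < ε →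
      ((fun k : ℕ => (((Finset.range k).filter fun j => ε ≤ |bseq j - b|).card : ℝ))
        =o[Filter.atTop] fun k : ℕ => (k : ℝ)))
    (φ : ℝ → ℝ) (hφ : Continuous φ) :
    Filter.Tendsto (fun k : ℕ => (1 / (k : ℝ)) * jacobiTrace k aseq bseq φ)
      Filter.atTop
      (nhds ((1 / Real.pi) * ∫ x in (0 : ℝ)..Real.pi, φ (a + 2 * b * Real.cos x))) := by
  obtain ⟨M, hM⟩ := hbdd
  have ha (j : ℕ) : |aseq j| ≤ M := (hM j).1
  have hb (j : ℕ) : |bseq j| ≤ M := (hM j).2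
  have hM0 : 0 ≤ M := (abs_nonneg _).trans (ha 0)
  refine tendsto_mean_of_forall_polynomial (R := 3 * M + (|a| + 2 * |b|)) (fun k i => ?_)
    (by fun_prop) (fun t => ?_) (tendsto_jacobiTrace_eval ha hb hacca haccb) hφ
  · have := ((jacobiMatrix_isHermitian k aseq bseq).abs_eigenvalues_le i).trans
      (linfty_opNorm_jacobiMatrix_le ha hb)
    exact abs_le.mp (this.trans (le_add_of_nonneg_right (by positivity)))
  · have hcos : 2 * |b| * |cos t| ≤ 2 * |b| :=
      mul_le_of_le_one_right (by positivity) (abs_cos_le_one t)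
    have : |a + 2 * b * cos t| ≤ |a| + 2 * |b| := by
      calc _ ≤ |a| + 2 * |b| * |cos t| := by simpa [abs_mul] using abs_add_le a (2 * b * cos t)
        _ ≤ |a| + 2 * |b| := by linarith
    exact abs_le.mp (this.trans (le_add_of_nonneg_left (by positivity)))

/-- Kuijlaars–Serra Capizzano, single accumulation point: bounded sequences
`(a_k)ₖ, (b_k)ₖ`, `b_k > 0`, with `a_j → a`, `b_j → b` except on sets of size `o(k)`, give
`lim (1/k)·Trace[φ(J)] = (1/π) ∫_0^π φ(a+2b cos x) dx` for continuous `φ`. -/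
theorem trace_formula_single_point (aseq bseq : ℕ → ℝ)
    (hbpos : ∀ j, 0 < bseq j)
    (hbdd : ∃ M : ℝ, ∀ j, |aseq j| ≤ M ∧ |bseq j| ≤ M)
    (a b : ℝ) (hb : 0 < b)
    (hacca : ∀ ε : ℝ, 0 < ε →
      ((fun k : ℕ => (((Finset.range k).filter fun j => ε ≤ |aseq j - a|).card : ℝ))
        =o[Filter.atTop] fun k : ℕ => (k : ℝ)))
    (haccb : ∀ ε : ℝ, 0 < ε →
      ((fun k : ℕ => (((Finset.range k).filter fun j => ε ≤ |bseq j - b|).card : ℝ))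
        =o[Filter.atTop] fun k : ℕ => (k : ℝ)))
    (φ : ℝ → ℝ) (hφ : Continuous φ) :
    Filter.Tendsto (fun k : ℕ => (1 / (k : ℝ)) * jacobiTrace k aseq bseq φ)
      Filter.atTop
      (nhds ((1 / Real.pi) * ∫ x in (0 : ℝ)..Real.pi, φ (a + 2 * b * Real.cos x))) :=
  trace_formula_single_point_general aseq bseq hbdd a b hacca haccb φ hφ
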